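/- (η-heredity for Lipschitz Bernoulli shifts.) Let (Y_t)_{t∈ℤ} be a strictly stationary real-valued process with E|Y_0| < ∞ which is η-weakly dependent with coefficients η_Y(r), and let H: ℝ^(ℤ) → ℝ satisfy condition (★) with exponent ℓ = 0 and nonnegative weights (b_s)_{s∈ℤ} such that L = Σ_{j∈ℤ} b_j < ∞. Then the Bernoulli shift X_n = H(Y_{n−j}, j∈ℤ) is η-weakly dependent with coefficients η(k) ≤ inf_{r ≥ 0, 2r ≤ k} [ 2 Σ_{|i|≥r} b_i ‖Y_0‖_{L^1} + (2r+1) L η_Y(k−2r) ]. -/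

import Mathlib

open MeasureTheory Filter

section Defs

variable {Ω : Type*} [MeasurableSpace Ω]

/-- Covariance of two real observables. -/
noncomputable def cov (μ : Measure Ω) (f g : Ω → ℝ) : ℝ :=
  ∫ ω, f ω * g ω ∂μ - (∫ ω, f ω ∂μ) * (∫ ω, g ω ∂μ)

/-- Strict stationarity of a real-valued process indexed by ℤ. -/
def IsStrictlyStationaryProc (μ : Measure Ω) (X : ℤ → Ω → ℝ) : Prop :=
  ∀ (t : ℤ) (n : ℕ) (s : Fin n → ℤ),
    Measure.map (fun ω (i : Fin n) => X (s i + t) ω) μ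
      = Measure.map (fun ω (i : Fin n) => X (s i) ω) μ

/-- `a` is a Lipschitz bound for `f` w.r.t. the ℓ¹ distance on tuples. -/
def LipBound {u : ℕ} (f : (Fin u → ℝ) → ℝ) (a : ℝ) : Prop :=
  ∀ x y, |f x - f y| ≤ a * ∑ i, |x i - y i|

/-- (ε, ψ)-weak dependence in the sense of Doukhan and Louhichi. -/
def WeaklyDependent (μ : Measure Ω) (X : ℤ → Ω → ℝ)
    (ψ : ℕ → ℕ → ℝ → ℝ → ℝ) (ε : ℕ → ℝ) : Prop :=
  (∀ r, 0 ≤ ε r) ∧ Antitone ε ∧ Tendsto ε atTop (nhds 0) ∧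
  ∀ (u v : ℕ), 0 < u → 0 < v →
  ∀ (r : ℕ) (s : Fin u → ℤ) (t : Fin v → ℤ),
    Monotone s → Monotone t → (∀ i j, s i + (r : ℤ) ≤ t j) →
    ∀ (f : (Fin u → ℝ) → ℝ) (g : (Fin v → ℝ) → ℝ) (a b : ℝ),
      (∀ x, |f x| ≤ 1) → (∀ x, |g x| ≤ 1) →
      LipBound f a → LipBound g b → 0 ≤ a → 0 ≤ b →
      |cov μ (fun ω => f (fun i => X (s i) ω)) (fun ω => g (fun i => X (t i) ω))|
        ≤ ψ u v a b * ε r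

/-- ψ for κ-weak dependence. -/
def kappaPsi : ℕ → ℕ → ℝ → ℝ → ℝ := fun u v a b => u * v * a * b
/-- ψ for η-weak dependence. -/
def etaPsi : ℕ → ℕ → ℝ → ℝ → ℝ := fun u v a b => u * a + v * b
/-- ψ for λ-weak dependence. -/
def lambdaPsi : ℕ → ℕ → ℝ → ℝ → ℝ := fun u v a b => u * v * a * b + u * a + v * b

/-- Partial sums S_n = X_1 + ⋯ + X_n. -/
noncomputable def partialSum (X : ℤ → Ω → ℝ) (n : ℕ) (ω : Ω) : ℝ :=
  ∑ i ∈ Finset.Icc 1 n, X (i : ℤ) ω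

/-- Convergence in distribution to the Gaussian law N(0, v). -/
def ConvToGaussian (μ : Measure Ω) (S : ℕ → Ω → ℝ) (v : NNReal) : Prop :=
  ∀ φ : BoundedContinuousFunction ℝ ℝ,
    Tendsto (fun n => ∫ ω, φ (S n ω) ∂μ) atTop
      (nhds (∫ x, φ x ∂(ProbabilityTheory.gaussianReal 0 v)))

/-- Truncated input sequence (Y_{n-j} 1_{|j| ≤ I})_{j ∈ ℤ}. -/
noncomputable def truncSeq (Y : ℤ → Ω → ℝ) (n : ℤ) (I : ℕ) (ω : Ω) : ℤ → ℝ :=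
  fun j => if |j| ≤ (I : ℤ) then Y (n - j) ω else 0

/-- Condition (★) with exponent ℓ and weights b. -/
def StarCondition (H : (ℤ → ℝ) → ℝ) (ℓ : ℝ) (b : ℤ → ℝ) : Prop :=
  ∀ x y : ℤ → ℝ, (Function.support x).Finite → (Function.support y).Finite →
    ∀ s : ℤ, (∀ i, i ≠ s → x i = y i) →
      |H x - H y| ≤ b s * max ((⨆ i, |Function.update x s 0 i|) ^ ℓ) 1 * |x s - y s|

/-- `X n` is the L^p limit of the truncated Bernoulli shifts of `H` applied to `Y`. -/
def IsBernoulliShift (μ : Measure Ω) (Y : ℤ → Ω → ℝ) (H : (ℤ → ℝ) → ℝ)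
    (p : ENNReal) (X : ℤ → Ω → ℝ) : Prop :=
  ∀ n : ℤ, MemLp (X n) p μ ∧
    Tendsto (fun I : ℕ => eLpNorm (fun ω => H (truncSeq Y n I ω) - X n ω) p μ)
      atTop (nhds 0)

end Defs
open Asymptotics

/-!
Truncating the input to the window `|j| ≤ r` makes `X n` a function of `Y (n - r), …, Y (n + r)`,
Lipschitz with constant `L = ∑ j, b j` by (★) with `ℓ = 0`; by (★) and stationarity this truncation
costs at most `∑_{|i| ≥ r} b i · ‖Y 0‖₁` in `L¹`. A Lipschitz observable (constant `a`) of `u`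
truncated outputs is therefore a Lipschitz observable (constant `a L`) of the `(2r+1) u` inputs in
their windows, listed with repetitions and sorted; past and future windows stay `k - 2r` apart, so
the η-dependence of `Y` bounds its covariance by `(2r+1)(u a + v b) L η_Y(k - 2r)`. Replacing a
bounded observable by an `L¹`-close one moves a covariance by at most twice the `L¹` distance, and
`ε k` is the least of the resulting bounds over `r ≤ k / 2`.
-/

open Finset ProbabilityTheory Topology ENNReal

section Lipschitz

variable {Ω : Type*} {u : ℕ} {f : (Fin u → ℝ) → ℝ} {a : ℝ}

lemma LipBound.continuous (hf : LipBound f a) (ha : 0 ≤ a) : Continuous f := by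
  refine (LipschitzWith.of_dist_le_mul (K := (a * u).toNNReal) fun x y => ?_).continuous
  rw [Real.dist_eq, Real.coe_toNNReal _ (by positivity)]
  calc |f x - f y| ≤ a * ∑ i, |x i - y i| := hf x y
    _ ≤ a * ∑ _i : Fin u, dist x y := by
        gcongr with i
        exact Real.dist_eq (x i) (y i) ▸ dist_le_pi_dist x y i
    _ = a * u * dist x y := by simp [mul_assoc]

lemma LipBound.comp_perm (hf : LipBound f a) (σ : Equiv.Perm (Fin u)) :
    LipBound (fun x => f (x ∘ σ)) a := fun x y => by
  simpa only [Function.comp_apply, Equiv.sum_comp σ fun i => |x i - y i|] using hf (x ∘ σ) (y ∘ σ)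

lemma LipBound.comp_blocks {m : ℕ} (hf : LipBound f a) (ha : 0 ≤ a) {h : (Fin m → ℝ) → ℝ}
    {L : ℝ} (hh : LipBound h L) :
    LipBound (fun x : Fin (m * u) → ℝ => f fun i => h fun c => x (finProdFinEquiv (c, i)))
      (a * L) := fun x y => by
  have hsum : ∑ i : Fin u, ∑ c : Fin m,
      |x (finProdFinEquiv (c, i)) - y (finProdFinEquiv (c, i))| = ∑ p, |x p - y p| := by
    rw [sum_comm, ← Fintype.sum_prod_type', Equiv.sum_comp finProdFinEquiv fun p => |x p - y p|]
  calc _ ≤ a * ∑ i : Fin u, |h (fun c => x (finProdFinEquiv (c, i)))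
          - h (fun c => y (finProdFinEquiv (c, i)))| := hf _ _
    _ ≤ a * ∑ i : Fin u, L * ∑ c : Fin m,
          |x (finProdFinEquiv (c, i)) - y (finProdFinEquiv (c, i))| := by
        gcongr with i
        exact hh _ _
    _ = a * L * ∑ p, |x p - y p| := by rw [← mul_sum, hsum, mul_assoc]

lemma LipBound.integral_abs_sub_le [MeasurableSpace Ω] {μ : Measure Ω} (hf : LipBound f a)
    (ha : 0 ≤ a) {Z Z' : Fin u → Ω → ℝ} (hint : ∀ i, Integrable (fun ω => Z i ω - Z' i ω) μ) {δ : ℝ}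
    (hδ : ∀ i, ∫ ω, |Z i ω - Z' i ω| ∂μ ≤ δ) :
    ∫ ω, |f (fun i => Z i ω) - f (fun i => Z' i ω)| ∂μ ≤ a * (u * δ) := by
  have hsum : Integrable (fun ω => ∑ i, |Z i ω - Z' i ω|) μ :=
    integrable_finsetSum _ fun i _ => (hint i).abs
  calc _ ≤ ∫ ω, a * ∑ i, |Z i ω - Z' i ω| ∂μ :=
        integral_mono_of_nonneg (ae_of_all _ fun ω => abs_nonneg _) (hsum.const_mul a)
          (ae_of_all _ fun ω => hf _ _)
    _ = a * ∑ i, ∫ ω, |Z i ω - Z' i ω| ∂μ := by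
        rw [integral_const_mul, integral_finsetSum _ fun i _ => (hint i).abs]
    _ ≤ a * (u * δ) := by
        gcongr
        simpa using sum_le_sum fun i (_ : i ∈ univ) => hδ i

end Lipschitz

section Covariance

variable {Ω : Type*} [MeasurableSpace Ω] {μ : Measure Ω}

lemma cov_comm (F G : Ω → ℝ) : cov μ F G = cov μ G F := by
  simp only [cov, mul_comm]

variable [IsProbabilityMeasure μ] {F F' G G' : Ω → ℝ}

lemma abs_cov_sub_cov_le (hF : AEStronglyMeasurable F μ) (hF' : AEStronglyMeasurable F' μ)
    (hG : AEStronglyMeasurable G μ) (hFb : ∀ ω, |F ω| ≤ 1) (hF'b : ∀ ω, |F' ω| ≤ 1)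
    (hGb : ∀ ω, |G ω| ≤ 1) :
    |cov μ F G - cov μ F' G| ≤ 2 * ∫ ω, |F ω - F' ω| ∂μ := by
  have bounded_integrable : ∀ {φ : Ω → ℝ}, AEStronglyMeasurable φ μ → (∀ ω, |φ ω| ≤ 1) →
      Integrable φ μ := fun hφ hφb => .of_bound hφ 1 (ae_of_all _ hφb)
  have hFG : Integrable (fun ω => F ω * G ω) μ := bounded_integrable (hF.mul hG) fun ω => by
    rw [abs_mul]; exact mul_le_one₀ (hFb ω) (abs_nonneg _) (hGb ω)
  have hF'G : Integrable (fun ω => F' ω * G ω) μ := bounded_integrable (hF'.mul hG) fun ω => by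
    rw [abs_mul]; exact mul_le_one₀ (hF'b ω) (abs_nonneg _) (hGb ω)
  have hFi := bounded_integrable hF hFb
  have hF'i := bounded_integrable hF' hF'b
  have hsplit : cov μ F G - cov μ F' G
      = ∫ ω, (F ω - F' ω) * G ω ∂μ - (∫ ω, F ω - F' ω ∂μ) * ∫ ω, G ω ∂μ := by
    simp only [cov, sub_mul, integral_sub hFG hF'G, integral_sub hFi hF'i]
    ring
  have hDG : |∫ ω, (F ω - F' ω) * G ω ∂μ| ≤ ∫ ω, |F ω - F' ω| ∂μ :=
    norm_integral_le_of_norm_le (f := fun ω => (F ω - F' ω) * G ω) (hFi.sub hF'i).abs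
      (ae_of_all _ fun ω => by
        simpa [abs_mul] using mul_le_of_le_one_right (abs_nonneg (F ω - F' ω)) (hGb ω))
  have hGint : |∫ ω, G ω ∂μ| ≤ 1 := by
    simpa using norm_integral_le_of_norm_le_const (f := G) (C := 1) (ae_of_all μ hGb)
  have hDint : |∫ ω, F ω - F' ω ∂μ| ≤ ∫ ω, |F ω - F' ω| ∂μ := abs_integral_le_integral_abs
  rw [hsplit]
  calc _ ≤ |∫ ω, (F ω - F' ω) * G ω ∂μ| + |∫ ω, F ω - F' ω ∂μ| * |∫ ω, G ω ∂μ| := by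
        rw [← abs_mul]; exact abs_sub _ _
    _ ≤ 2 * ∫ ω, |F ω - F' ω| ∂μ := by nlinarith [abs_nonneg (∫ ω, F ω - F' ω ∂μ)]

lemma abs_cov_le_of_approx (hF : AEStronglyMeasurable F μ) (hF' : AEStronglyMeasurable F' μ)
    (hG : AEStronglyMeasurable G μ) (hG' : AEStronglyMeasurable G' μ)
    (hFb : ∀ ω, |F ω| ≤ 1) (hF'b : ∀ ω, |F' ω| ≤ 1)
    (hGb : ∀ ω, |G ω| ≤ 1) (hG'b : ∀ ω, |G' ω| ≤ 1) :
    |cov μ F G| ≤ |cov μ F' G'| + 2 * ∫ ω, |F ω - F' ω| ∂μ + 2 * ∫ ω, |G ω - G' ω| ∂μ := by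
  have h1 := abs_cov_sub_cov_le hF hF' hG hFb hF'b hGb
  have h2 := abs_cov_sub_cov_le hG hG' hF' hGb hG'b hF'b
  rw [cov_comm G F', cov_comm G' F'] at h2
  linarith [abs_sub_abs_le_abs_sub (cov μ F G) (cov μ F' G),
    abs_sub_abs_le_abs_sub (cov μ F' G) (cov μ F' G')]

end Covariance

section WindowSeq

variable {Ω : Type*} (r : ℕ) (z : Fin (2 * r + 1) → ℝ)

noncomputable def windowSeq : ℤ → ℝ := fun j =>
  if h : |j| ≤ r then z ⟨(r - j).toNat, by have := abs_le.1 h; omega⟩ else 0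

lemma windowSeq_natCast_sub_val (c : Fin (2 * r + 1)) : windowSeq r z (r - c) = z c := by
  have hc : |(r : ℤ) - c| ≤ r := abs_le.2 ⟨by omega, by omega⟩
  simp only [windowSeq, dif_pos hc]
  congr 1
  ext
  simp

lemma windowSeq_of_not_abs_le {j : ℤ} (hj : ¬ |j| ≤ r) : windowSeq r z j = 0 :=
  dif_neg hj

lemma finite_support_windowSeq : (Function.support (windowSeq r z)).Finite :=
  (Icc (-(r : ℤ)) r).finite_toSet.subset fun j hj => by
    by_contra hjr
    exact hj (windowSeq_of_not_abs_le r z fun h => hjr (by simpa using abs_le.1 h))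

lemma truncSeq_eq_windowSeq (Y : ℤ → Ω → ℝ) (n : ℤ) (ω : Ω) :
    truncSeq Y n r ω = windowSeq r fun c => Y (n - r + c) ω := by
  ext j
  by_cases hj : |j| ≤ r
  · have ⟨h₁, h₂⟩ := abs_le.1 hj
    simp only [truncSeq, windowSeq, hj, if_pos, dif_pos]
    congr 1
    omega
  · simp only [truncSeq, if_neg hj, windowSeq_of_not_abs_le r _ hj]

end WindowSeq

section Star

variable {Ω : Type*} {H : (ℤ → ℝ) → ℝ} {bw : ℤ → ℝ}

lemma StarCondition.abs_sub_le_sum (hstar : StarCondition H 0 bw) (S : Finset ℤ) {x y : ℤ → ℝ}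
    (hx : (Function.support x).Finite) (hxy : ∀ j ∉ S, x j = y j) :
    |H x - H y| ≤ ∑ j ∈ S, bw j * |x j - y j| := by
  classical
  induction S using Finset.induction_on generalizing x with
  | empty => simp [funext fun j => hxy j (notMem_empty j)]
  | @insert s S hs ih =>
    set x' := Function.update x s (y s)
    have hx'x : ∀ j, j ≠ s → x' j = x j := fun j hj => Function.update_of_ne hj _ _
    have hx' : (Function.support x').Finite :=
      (hx.union (Set.finite_singleton s)).subset fun j hj => by
        by_cases hjs : j = s
        · exact Or.inr hjs
        · exact Or.inl (by rwa [Function.mem_support, hx'x j hjs] at hj)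
    have hstep : |H x - H x'| ≤ bw s * |x s - y s| := by
      simpa [x'] using hstar x x' hx hx' s fun i hi => (Function.update_of_ne hi _ _).symm
    have hrest : |H x' - H y| ≤ ∑ j ∈ S, bw j * |x j - y j| := by
      refine (ih hx' fun j hj => ?_).trans_eq (sum_congr rfl fun j hj => ?_)
      · by_cases hjs : j = s
        · simp [x', hjs]
        · rw [hx'x j hjs]
          exact hxy j (by simp [hjs, hj])
      · rw [hx'x j (ne_of_mem_of_not_mem hj hs)]
    rw [sum_insert hs]
    linarith [abs_sub_le (H x) (H x') (H y)]

lemma StarCondition.abs_sub_truncSeq_le {Y : ℤ → Ω → ℝ} (hstar : StarCondition H 0 bw) {r I : ℕ}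
    (hrI : r ≤ I) (n : ℤ) (ω : Ω) :
    |H (truncSeq Y n I ω) - H (truncSeq Y n r ω)|
      ≤ ∑ j ∈ (Icc (-(I : ℤ)) I).filter (fun j => (r : ℤ) < |j|), bw j * |Y (n - j) ω| := by
  have hfin : (Function.support (truncSeq Y n I ω)).Finite := by
    rw [truncSeq_eq_windowSeq]
    exact finite_support_windowSeq _ _
  refine (hstar.abs_sub_le_sum _ hfin fun j hj => ?_).trans_eq (sum_congr rfl fun j hj => ?_)
  · simp only [mem_filter, mem_Icc, not_and, not_lt] at hj
    simp only [truncSeq]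
    split_ifs with hI hr hr
    · rfl
    · exact absurd (hj (abs_le.1 hI)) hr
    · exact absurd (hr.trans (by exact_mod_cast hrI)) hI
    · rfl
  · obtain ⟨hI, hr⟩ := mem_filter.1 hj
    simp [truncSeq, abs_le.2 (mem_Icc.1 hI), not_le.2 hr]

lemma StarCondition.lipBound_windowSeq (hstar : StarCondition H 0 bw) (r : ℕ)
    (hbw : ∀ s, 0 ≤ bw s) (hL : Summable bw) :
    LipBound (fun z => H (windowSeq r z)) (∑' j, bw j) := fun z z' => by
  have hinj : Function.Injective fun c : Fin (2 * r + 1) => (r : ℤ) - c :=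
    fun c₁ c₂ h => Fin.ext (by simp only at h; omega)
  have hagree : ∀ j ∉ univ.image fun c : Fin (2 * r + 1) => (r : ℤ) - c,
      windowSeq r z j = windowSeq r z' j := fun j hj => by
    by_cases hjr : |j| ≤ r
    · have ⟨h₁, h₂⟩ := abs_le.1 hjr
      exact absurd (mem_image.2 ⟨⟨(r - j).toNat, by omega⟩, mem_univ _, by simp; omega⟩) hj
    · rw [windowSeq_of_not_abs_le r z hjr, windowSeq_of_not_abs_le r z' hjr]
  refine (hstar.abs_sub_le_sum _ (finite_support_windowSeq r z) hagree).trans ?_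
  rw [sum_image fun c₁ _ c₂ _ h => hinj h, mul_sum]
  refine sum_le_sum fun c _ => ?_
  rw [windowSeq_natCast_sub_val, windowSeq_natCast_sub_val]
  exact mul_le_mul_of_nonneg_right (hL.le_tsum _ fun j _ => hbw j) (abs_nonneg _)

lemma StarCondition.exists_sorted_window (hstar : StarCondition H 0 bw) (hbw : ∀ s, 0 ≤ bw s)
    (hL : Summable bw) {u : ℕ} (s : Fin u → ℤ) {f : (Fin u → ℝ) → ℝ} {a : ℝ}
    (hfb : ∀ x, |f x| ≤ 1) (hfl : LipBound f a) (ha : 0 ≤ a) (r : ℕ) :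
    ∃ (s' : Fin ((2 * r + 1) * u) → ℤ) (F : (Fin ((2 * r + 1) * u) → ℝ) → ℝ),
      Monotone s' ∧ (∀ p, ∃ i, s i - r ≤ s' p ∧ s' p ≤ s i + r) ∧ (∀ x, |F x| ≤ 1) ∧
      LipBound F (a * ∑' j, bw j) ∧
      ∀ y : ℤ → ℝ, F (y ∘ s') = f fun i => H (windowSeq r fun c => y (s i - r + c)) := by
  set q : Fin ((2 * r + 1) * u) → ℤ := fun p =>
    s (finProdFinEquiv.symm p).2 - r + (finProdFinEquiv.symm p).1
  set σ := Tuple.sort q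
  refine ⟨q ∘ σ, fun x => f fun i => H (windowSeq r fun c => (x ∘ σ.symm) (finProdFinEquiv (c, i))),
    Tuple.monotone_sort q, fun p => ⟨(finProdFinEquiv.symm (σ p)).2, ?_⟩, fun x => hfb _,
    ((hfl.comp_blocks ha (hstar.lipBound_windowSeq r hbw hL)).comp_perm σ.symm), fun y => ?_⟩
  · have := (finProdFinEquiv.symm (σ p)).1.isLt
    simp only [Function.comp_apply, q]
    omega
  · simp only [Function.comp_apply, Equiv.apply_symm_apply, Equiv.symm_apply_apply, q]

end Star

section TailWeight

variable {b : ℤ → ℝ}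

noncomputable def tailWeight (b : ℤ → ℝ) (r : ℕ) : ℝ := ∑' i : {i : ℤ // (r : ℤ) ≤ |i|}, b i

lemma tailWeight_eq_tsum_indicator (r : ℕ) :
    tailWeight b r = ∑' i, Set.indicator {i : ℤ | (r : ℤ) ≤ |i|} b i :=
  tsum_subtype {i : ℤ | (r : ℤ) ≤ |i|} b

lemma tailWeight_nonneg (hb : ∀ i, 0 ≤ b i) (r : ℕ) : 0 ≤ tailWeight b r :=
  tsum_nonneg fun i => hb i

lemma sum_le_tailWeight (hb : ∀ i, 0 ≤ b i) (hbs : Summable b) {r : ℕ} {S : Finset ℤ}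
    (hS : ∀ j ∈ S, (r : ℤ) ≤ |j|) : ∑ j ∈ S, b j ≤ tailWeight b r := by
  rw [tailWeight_eq_tsum_indicator]
  calc ∑ j ∈ S, b j = ∑ j ∈ S, Set.indicator {i : ℤ | (r : ℤ) ≤ |i|} b j :=
        sum_congr rfl fun j hj =>
          (Set.indicator_of_mem (s := {i : ℤ | (r : ℤ) ≤ |i|}) (hS j hj) b).symm
    _ ≤ _ := (hbs.indicator _).sum_le_tsum S fun i _ => Set.indicator_nonneg (fun i _ => hb i) i

lemma tendsto_tailWeight (hb : ∀ i, 0 ≤ b i) (hbs : Summable b) :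
    Tendsto (tailWeight b) atTop (𝓝 0) := by
  have hpointwise (i : ℤ) :
      Tendsto (fun r : ℕ => Set.indicator {i : ℤ | (r : ℤ) ≤ |i|} b i) atTop (𝓝 0) :=
    tendsto_const_nhds.congr' <| (eventually_gt_atTop i.natAbs).mono fun r hr =>
      (Set.indicator_of_notMem (by rw [Set.mem_ofPred_eq, Int.abs_eq_natAbs]; omega) b).symm
  have hdom : ∀ᶠ r : ℕ in atTop, ∀ i, ‖Set.indicator {i : ℤ | (r : ℤ) ≤ |i|} b i‖ ≤ b i :=
    Eventually.of_forall fun r i => by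
      rw [Real.norm_of_nonneg (Set.indicator_nonneg (fun j _ => hb j) i)]
      exact Set.indicator_le_self' (fun j _ => hb j) i
  simpa [funext tailWeight_eq_tsum_indicator] using
    tendsto_tsum_of_dominated_convergence hbs hpointwise hdom

end TailWeight

lemma IsStrictlyStationaryProc.identDistrib {Ω : Type*} [MeasurableSpace Ω] {μ : Measure Ω}
    {Y : ℤ → Ω → ℝ} (hstat : IsStrictlyStationaryProc μ Y) (hmeas : ∀ t, Measurable (Y t))
    (t : ℤ) : IdentDistrib (Y t) (Y 0) μ μ where
  aemeasurable_fst := (hmeas t).aemeasurable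
  aemeasurable_snd := (hmeas 0).aemeasurable
  map_eq := by
    have hmarginal := hstat t 1 fun _ => 0
    simp only [zero_add] at hmarginal
    have hmap (τ : ℤ) : Measure.map (Y τ) μ = Measure.map (fun v : Fin 1 → ℝ => v 0)
        (Measure.map (fun ω (_ : Fin 1) => Y τ ω) μ) := by
      rw [Measure.map_map (measurable_pi_apply 0) (measurable_pi_lambda _ fun _ => hmeas τ)]
      rfl
    rw [hmap t, hmap 0, hmarginal]

section Truncation

variable {Ω : Type*} [MeasurableSpace Ω] {μ : Measure Ω} {Y : ℤ → Ω → ℝ} {H : (ℤ → ℝ) → ℝ}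
  {bw : ℤ → ℝ}

lemma measurable_truncSeq (hmeas : ∀ t, Measurable (Y t)) (n : ℤ) (I : ℕ) :
    Measurable (truncSeq Y n I) :=
  measurable_pi_lambda _ fun j => by
    by_cases hj : |j| ≤ (I : ℤ) <;> simp [truncSeq, hj, hmeas]

lemma eLpNorm_truncSeq_sub_truncSeq_le (hid : ∀ t, IdentDistrib (Y t) (Y 0) μ μ)
    (hmom : Integrable (Y 0) μ) (hstar : StarCondition H 0 bw) (hbw : ∀ s, 0 ≤ bw s)
    (hL : Summable bw) {r I : ℕ} (hrI : r ≤ I) (n : ℤ) :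
    eLpNorm (fun ω => H (truncSeq Y n I ω) - H (truncSeq Y n r ω)) 1 μ
      ≤ ENNReal.ofReal (tailWeight bw r * ∫ ω, |Y 0 ω| ∂μ) := by
  set S := (Icc (-(I : ℤ)) I).filter (fun j => (r : ℤ) < |j|)
  have hint (j : ℤ) : Integrable (fun ω => bw j * |Y (n - j) ω|) μ :=
    ((hid (n - j)).integrable_iff.2 hmom).abs.const_mul _
  have habs (t : ℤ) : ∫ ω, |Y t ω| ∂μ = ∫ ω, |Y 0 ω| ∂μ :=
    ((hid t).comp measurable_abs).integral_eq
  calc eLpNorm (fun ω => H (truncSeq Y n I ω) - H (truncSeq Y n r ω)) 1 μ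
      = ∫⁻ ω, ‖H (truncSeq Y n I ω) - H (truncSeq Y n r ω)‖ₑ ∂μ := eLpNorm_one_eq_lintegral_enorm
    _ ≤ ∫⁻ ω, ENNReal.ofReal (∑ j ∈ S, bw j * |Y (n - j) ω|) ∂μ := lintegral_mono fun ω => by
        rw [Real.enorm_eq_ofReal_abs]
        exact ENNReal.ofReal_le_ofReal (hstar.abs_sub_truncSeq_le hrI n ω)
    _ = ENNReal.ofReal (∫ ω, ∑ j ∈ S, bw j * |Y (n - j) ω| ∂μ) :=
        (ofReal_integral_eq_lintegral_ofReal (integrable_finsetSum _ fun j _ => hint j)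
          (ae_of_all _ fun ω => sum_nonneg fun j _ => mul_nonneg (hbw j) (abs_nonneg _))).symm
    _ ≤ ENNReal.ofReal (tailWeight bw r * ∫ ω, |Y 0 ω| ∂μ) := by
        refine ENNReal.ofReal_le_ofReal ?_
        simp only [integral_finsetSum _ fun j _ => hint j, integral_const_mul, habs, ← sum_mul]
        exact mul_le_mul_of_nonneg_right
          (sum_le_tailWeight hbw hL fun j hj => (mem_filter.1 hj).2.le)
          (integral_nonneg fun _ => abs_nonneg _)

lemma eLpNorm_one_le_of_tendsto {F : ℕ → Ω → ℝ} {G Z : Ω → ℝ} {c : ℝ≥0∞}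
    (hF : ∀ I, AEStronglyMeasurable (F I) μ) (hG : AEStronglyMeasurable G μ)
    (hZ : AEStronglyMeasurable Z μ) (hlim : Tendsto (fun I => eLpNorm (F I - Z) 1 μ) atTop (𝓝 0))
    (hbound : ∀ᶠ I in atTop, eLpNorm (F I - G) 1 μ ≤ c) : eLpNorm (Z - G) 1 μ ≤ c := by
  refine ge_of_tendsto (by simpa using hlim.add_const c) (hbound.mono fun I hI => ?_)
  calc eLpNorm (Z - G) 1 μ = eLpNorm ((F I - G) - (F I - Z)) 1 μ := by congr 1; abel
    _ ≤ eLpNorm (F I - G) 1 μ + eLpNorm (F I - Z) 1 μ :=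
        eLpNorm_sub_le ((hF I).sub hG) ((hF I).sub hZ) le_rfl
    _ ≤ eLpNorm (F I - Z) 1 μ + c := by rw [add_comm]; gcongr

lemma integral_abs_le_of_eLpNorm_one_le {f : Ω → ℝ} {c : ℝ} (hf : AEStronglyMeasurable f μ)
    (hc : 0 ≤ c) (h : eLpNorm f 1 μ ≤ ENNReal.ofReal c) : ∫ ω, |f ω| ∂μ ≤ c := by
  refine (integral_norm_eq_lintegral_enorm hf).trans_le ?_
  rw [← eLpNorm_one_eq_lintegral_enorm]
  exact ENNReal.toReal_le_of_le_ofReal hc h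

end Truncation

section HeredityCoeff

variable {b : ℤ → ℝ} {m : ℝ} {η : ℕ → ℝ}

noncomputable def heredityTerm (b : ℤ → ℝ) (m : ℝ) (η : ℕ → ℝ) (k r : ℕ) : ℝ :=
  2 * tailWeight b r * m + (2 * (r : ℝ) + 1) * (∑' j : ℤ, b j) * η (k - 2 * r)

-- `Fin (k / 2 + 1)` lists the admissible `r`; over a finite index set `⨅` is a true minimum.
noncomputable def heredityCoeff (b : ℤ → ℝ) (m : ℝ) (η : ℕ → ℝ) (k : ℕ) : ℝ :=
  ⨅ r : Fin (k / 2 + 1), heredityTerm b m η k r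

lemma heredityTerm_nonneg (hb : ∀ i, 0 ≤ b i) (hm : 0 ≤ m) (hη : ∀ k, 0 ≤ η k) (k r : ℕ) :
    0 ≤ heredityTerm b m η k r := by
  have := tailWeight_nonneg hb r
  have : 0 ≤ ∑' j, b j := tsum_nonneg hb
  have := hη (k - 2 * r)
  unfold heredityTerm
  positivity

lemma heredityCoeff_le {k r : ℕ} (h : 2 * r ≤ k) : heredityCoeff b m η k ≤ heredityTerm b m η k r :=
  ciInf_le (Set.finite_range _).bddBelow (⟨r, by omega⟩ : Fin (k / 2 + 1))

lemma le_mul_heredityCoeff {x c : ℝ} {k : ℕ} (hc : 0 ≤ c)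
    (h : ∀ r : ℕ, 2 * r ≤ k → x ≤ c * heredityTerm b m η k r) : x ≤ c * heredityCoeff b m η k := by
  rw [heredityCoeff, Real.mul_iInf_of_nonneg hc]
  exact le_ciInf fun r => h r (by have := r.isLt; omega)

lemma heredityCoeff_nonneg (hb : ∀ i, 0 ≤ b i) (hm : 0 ≤ m) (hη : ∀ k, 0 ≤ η k) (k : ℕ) :
    0 ≤ heredityCoeff b m η k :=
  le_ciInf fun r => heredityTerm_nonneg hb hm hη k r

lemma heredityCoeff_antitone (hb : ∀ i, 0 ≤ b i) (hη : Antitone η) :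
    Antitone (heredityCoeff b m η) := fun k₁ k₂ hk => le_ciInf fun r => by
  refine (heredityCoeff_le (k := k₂) (r := r) (by have := r.isLt; omega)).trans ?_
  have : 0 ≤ ∑' j, b j := tsum_nonneg hb
  unfold heredityTerm
  gcongr
  exact hη (Nat.sub_le_sub_right hk _)

lemma tendsto_heredityCoeff (hb : ∀ i, 0 ≤ b i) (hbs : Summable b) (hm : 0 ≤ m)
    (hη0 : ∀ k, 0 ≤ η k) (hη : Tendsto η atTop (𝓝 0)) :
    Tendsto (heredityCoeff b m η) atTop (𝓝 0) := by
  refine tendsto_order.2 ⟨fun δ hδ => Eventually.of_forall fun k =>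
    hδ.trans_le (heredityCoeff_nonneg hb hm hη0 k), fun δ hδ => ?_⟩
  have htail : Tendsto (fun r => 2 * tailWeight b r * m) atTop (𝓝 0) := by
    simpa using ((tendsto_tailWeight hb hbs).const_mul 2).mul_const m
  obtain ⟨r, hr⟩ := (htail.eventually (gt_mem_nhds hδ)).exists
  have hterm : Tendsto (fun k => heredityTerm b m η k r) atTop (𝓝 (2 * tailWeight b r * m)) := by
    unfold heredityTerm
    simpa using tendsto_const_nhds.add
      (tendsto_const_nhds.mul (hη.comp (tendsto_sub_atTop_nat (2 * r))))
  filter_upwards [hterm.eventually (gt_mem_nhds hr), eventually_ge_atTop (2 * r)] with k hk hrk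
  exact (heredityCoeff_le hrk).trans_lt hk

end HeredityCoeff

section BernoulliShift

variable {Ω : Type*} [MeasurableSpace Ω] {μ : Measure Ω} {Y X : ℤ → Ω → ℝ} {H : (ℤ → ℝ) → ℝ}
  {bw : ℤ → ℝ}

lemma IsBernoulliShift.eLpNorm_sub_truncSeq_le (hX : IsBernoulliShift μ Y H 1 X)
    (hmeas : ∀ t, Measurable (Y t)) (hH : Measurable H)
    (hid : ∀ t, IdentDistrib (Y t) (Y 0) μ μ) (hmom : Integrable (Y 0) μ)
    (hstar : StarCondition H 0 bw) (hbw : ∀ s, 0 ≤ bw s) (hL : Summable bw) (n : ℤ) (r : ℕ) :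
    eLpNorm (fun ω => X n ω - H (truncSeq Y n r ω)) 1 μ
      ≤ ENNReal.ofReal (tailWeight bw r * ∫ ω, |Y 0 ω| ∂μ) :=
  eLpNorm_one_le_of_tendsto (F := fun I ω => H (truncSeq Y n I ω))
    (fun I => (hH.comp (measurable_truncSeq hmeas n I)).aestronglyMeasurable)
    (hH.comp (measurable_truncSeq hmeas n r)).aestronglyMeasurable (hX n).1.aestronglyMeasurable
    (hX n).2 ((eventually_ge_atTop r).mono fun _ hrI =>
      eLpNorm_truncSeq_sub_truncSeq_le hid hmom hstar hbw hL hrI n)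

lemma IsBernoulliShift.exists_window_approx (hX : IsBernoulliShift μ Y H 1 X)
    (hmeas : ∀ t, Measurable (Y t)) (hH : Measurable H)
    (hid : ∀ t, IdentDistrib (Y t) (Y 0) μ μ) (hmom : Integrable (Y 0) μ)
    (hstar : StarCondition H 0 bw) (hbw : ∀ s, 0 ≤ bw s) (hL : Summable bw) {u : ℕ}
    (s : Fin u → ℤ) {f : (Fin u → ℝ) → ℝ} {a : ℝ} (hfb : ∀ x, |f x| ≤ 1) (hfl : LipBound f a)
    (ha : 0 ≤ a) (r : ℕ) :
    ∃ (s' : Fin ((2 * r + 1) * u) → ℤ) (F : (Fin ((2 * r + 1) * u) → ℝ) → ℝ),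
      Monotone s' ∧ (∀ p, ∃ i, s i - r ≤ s' p ∧ s' p ≤ s i + r) ∧ (∀ x, |F x| ≤ 1) ∧
      LipBound F (a * ∑' j, bw j) ∧
      ∫ ω, |f (fun i => X (s i) ω) - F (fun p => Y (s' p) ω)| ∂μ
        ≤ a * (u * (tailWeight bw r * ∫ ω, |Y 0 ω| ∂μ)) := by
  obtain ⟨s', F, hs', hs'r, hFb, hFl, hFeval⟩ :=
    hstar.exists_sorted_window hbw hL s hfb hfl ha r
  refine ⟨s', F, hs', hs'r, hFb, hFl, ?_⟩
  have hF (ω : Ω) : F (fun p => Y (s' p) ω) = f fun i => H (truncSeq Y (s i) r ω) := by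
    simp only [truncSeq_eq_windowSeq]
    exact hFeval fun t => Y t ω
  have haesm (i : Fin u) :
      AEStronglyMeasurable (fun ω => X (s i) ω - H (truncSeq Y (s i) r ω)) μ :=
    (hX (s i)).1.aestronglyMeasurable.sub
      (hH.comp (measurable_truncSeq hmeas _ r)).aestronglyMeasurable
  have happrox (i : Fin u) := hX.eLpNorm_sub_truncSeq_le hmeas hH hid hmom hstar hbw hL (s i) r
  simp only [hF]
  exact hfl.integral_abs_sub_le ha
    (fun i => memLp_one_iff_integrable.1 ⟨haesm i, (happrox i).trans_lt ofReal_lt_top⟩)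
    fun i => integral_abs_le_of_eLpNorm_one_le (haesm i)
      (mul_nonneg (tailWeight_nonneg hbw r) (integral_nonneg fun _ => abs_nonneg _)) (happrox i)

lemma IsBernoulliShift.abs_cov_le [IsProbabilityMeasure μ] (hX : IsBernoulliShift μ Y H 1 X)
    (hmeas : ∀ t, Measurable (Y t)) (hH : Measurable H)
    (hid : ∀ t, IdentDistrib (Y t) (Y 0) μ μ) (hmom : Integrable (Y 0) μ)
    (hstar : StarCondition H 0 bw) (hbw : ∀ s, 0 ≤ bw s) (hL : Summable bw) {ηY : ℕ → ℝ}
    (hdep : WeaklyDependent μ Y etaPsi ηY) {u v k r : ℕ} (hu : 0 < u) (hv : 0 < v)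
    (hrk : 2 * r ≤ k) {s : Fin u → ℤ} {t : Fin v → ℤ} (hgap : ∀ i j, s i + k ≤ t j)
    {f : (Fin u → ℝ) → ℝ} {g : (Fin v → ℝ) → ℝ} {a b : ℝ} (hfb : ∀ x, |f x| ≤ 1)
    (hgb : ∀ x, |g x| ≤ 1) (hfl : LipBound f a) (hgl : LipBound g b) (ha : 0 ≤ a) (hb : 0 ≤ b) :
    |cov μ (fun ω => f fun i => X (s i) ω) (fun ω => g fun i => X (t i) ω)|
      ≤ etaPsi u v a b * heredityTerm bw (∫ ω, |Y 0 ω| ∂μ) ηY k r := by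
  obtain ⟨s', F, hs', hs'r, hFb, hFl, hFapprox⟩ :=
    hX.exists_window_approx hmeas hH hid hmom hstar hbw hL s hfb hfl ha r
  obtain ⟨t', G, ht', ht'r, hGb, hGl, hGapprox⟩ :=
    hX.exists_window_approx hmeas hH hid hmom hstar hbw hL t hgb hgl hb r
  have hL0 : 0 ≤ ∑' j, bw j := tsum_nonneg hbw
  have hgap' (p q) : s' p + ((k - 2 * r : ℕ) : ℤ) ≤ t' q := by
    obtain ⟨i, -, hi⟩ := hs'r p
    obtain ⟨j, hj, -⟩ := ht'r q
    have := hgap i j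
    omega
  have hYcov := hdep.2.2.2 _ _ (by positivity) (by positivity) (k - 2 * r) s' t' hs' ht' hgap'
    F G _ _ hFb hGb hFl hGl (mul_nonneg ha hL0) (mul_nonneg hb hL0)
  have hXobs {w : ℕ} {φ : (Fin w → ℝ) → ℝ} {c : ℝ} (hφ : LipBound φ c) (hc : 0 ≤ c)
      (τ : Fin w → ℤ) : AEStronglyMeasurable (fun ω => φ fun i => X (τ i) ω) μ :=
    (hφ.continuous hc).comp_aestronglyMeasurable (aemeasurable_pi_lambda _ fun i =>
      (hX (τ i)).1.aestronglyMeasurable.aemeasurable).aestronglyMeasurable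
  have hYobs {w : ℕ} {φ : (Fin w → ℝ) → ℝ} {c : ℝ} (hφ : LipBound φ c) (hc : 0 ≤ c)
      (τ : Fin w → ℤ) : AEStronglyMeasurable (fun ω => φ fun i => Y (τ i) ω) μ :=
    ((hφ.continuous hc).measurable.comp
      (measurable_pi_lambda _ fun i => hmeas (τ i))).aestronglyMeasurable
  refine (abs_cov_le_of_approx (hXobs hfl ha s) (hYobs hFl (mul_nonneg ha hL0) s')
    (hXobs hgl hb t) (hYobs hGl (mul_nonneg hb hL0) t') (fun _ => hfb _) (fun _ => hFb _)
    (fun _ => hgb _) (fun _ => hGb _)).trans ?_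
  simp only [etaPsi, heredityTerm] at hYcov ⊢
  push_cast at hYcov
  linarith

end BernoulliShift

theorem bernoulli_shift_eta_heredity_lipschitz
    {Ω : Type*} [MeasurableSpace Ω] (μ : Measure Ω) [IsProbabilityMeasure μ]
    (Y : ℤ → Ω → ℝ) (hmeas : ∀ t, Measurable (Y t))
    (hstat : IsStrictlyStationaryProc μ Y)
    (H : (ℤ → ℝ) → ℝ) (hH : Measurable H)
    (hmom : Integrable (Y 0) μ)
    (bw : ℤ → ℝ) (hbw : ∀ s, 0 ≤ bw s)
    (hstar : StarCondition H 0 bw)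
    (hL : Summable bw)
    (ηY : ℕ → ℝ) (hdep : WeaklyDependent μ Y etaPsi ηY)
    (X : ℤ → Ω → ℝ) (hX : IsBernoulliShift μ Y H 1 X) :
    ∃ ε : ℕ → ℝ, WeaklyDependent μ X etaPsi ε ∧
      ∀ k r : ℕ, 2 * r ≤ k →
        ε k ≤ 2 * (∑' i : {i : ℤ // (r : ℤ) ≤ |i|}, bw i) * (∫ ω, |Y 0 ω| ∂μ)
          + (2 * (r : ℝ) + 1) * (∑' j : ℤ, bw j) * ηY (k - 2 * r) := by
  have hid := hstat.identDistrib hmeas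
  have hM : 0 ≤ ∫ ω, |Y 0 ω| ∂μ := integral_nonneg fun _ => abs_nonneg _
  refine ⟨heredityCoeff bw (∫ ω, |Y 0 ω| ∂μ) ηY,
    ⟨heredityCoeff_nonneg hbw hM hdep.1, heredityCoeff_antitone hbw hdep.2.1,
      tendsto_heredityCoeff hbw hL hM hdep.1 hdep.2.2.1, ?_⟩, fun k r hr => heredityCoeff_le hr⟩
  intro u v hu hv k s t _ _ hgap f g a b hfb hgb hfl hgl ha hb
  exact le_mul_heredityCoeff (by unfold etaPsi; positivity) fun r hr =>
    hX.abs_cov_le hmeas hH hid hmom hstar hbw hL hdep hu hv hr hgap hfb hgb hfl hgl ha hb
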